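/- arXiv:2306.06660 — 3 statements merged into one kernel-verified Lean document; each statement's English description precedes it below -/
import Mathlib

section
/- For every z ∈ ℂ, the function φ_{0,1}(it, z) tends to e^{−2πiz} + 10 + e^{2πiz} as the real parameter t tends to +∞; that is, the q⁰-coefficient of the Fourier expansion of φ_{0,1} is y⁻¹ + 10 + y. -/
open Complex Filter Topology

/-- The Jacobi theta function θ₁. -/
noncomputable def theta1 (τ z : ℂ) : ℂ :=
  -Complex.I * ∑' n : ℤ, (-1 : ℂ) ^ n *
    Complex.exp (Real.pi * Complex.I * ((n : ℂ) + 1 / 2) ^ 2 * τ) *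
    Complex.exp (2 * Real.pi * Complex.I * ((n : ℂ) + 1 / 2) * z)

/-- The Jacobi theta function θ₂. -/
noncomputable def theta2 (τ z : ℂ) : ℂ :=
  ∑' n : ℤ, Complex.exp (Real.pi * Complex.I * ((n : ℂ) + 1 / 2) ^ 2 * τ) *
    Complex.exp (2 * Real.pi * Complex.I * ((n : ℂ) + 1 / 2) * z)

/-- The Jacobi theta function θ₃. -/
noncomputable def theta3 (τ z : ℂ) : ℂ :=
  ∑' n : ℤ, Complex.exp (Real.pi * Complex.I * (n : ℂ) ^ 2 * τ) *
    Complex.exp (2 * Real.pi * Complex.I * (n : ℂ) * z)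

/-- The Jacobi theta function θ₄. -/
noncomputable def theta4 (τ z : ℂ) : ℂ :=
  ∑' n : ℤ, (-1 : ℂ) ^ n * Complex.exp (Real.pi * Complex.I * (n : ℂ) ^ 2 * τ) *
    Complex.exp (2 * Real.pi * Complex.I * (n : ℂ) * z)

/-- The Dedekind eta function. -/
noncomputable def dedekindEta (τ : ℂ) : ℂ :=
  Complex.exp (Real.pi * Complex.I * τ / 12) *
    ∏' n : ℕ, (1 - Complex.exp (2 * Real.pi * Complex.I * ((n : ℂ) + 1) * τ))

/-- The weak Jacobi form φ_{0,1}. -/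
noncomputable def phi01 (τ z : ℂ) : ℂ :=
  4 * ((theta2 τ z / theta2 τ 0) ^ 2 + (theta3 τ z / theta3 τ 0) ^ 2 +
    (theta4 τ z / theta4 τ 0) ^ 2)

/-- The weak Jacobi form φ_{-2,1}. -/
noncomputable def phim21 (τ z : ℂ) : ℂ := -theta1 τ z ^ 2 / dedekindEta τ ^ 6

/-- The normalized Eisenstein series E₄. -/
noncomputable def E4 (τ : ℂ) : ℂ :=
  1 + 240 * ∑' n : ℕ, (∑ d ∈ (n + 1).divisors, (d : ℂ) ^ 3) *
    Complex.exp (2 * Real.pi * Complex.I * ((n : ℂ) + 1) * τ)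

/-- The normalized Eisenstein series E₆. -/
noncomputable def E6 (τ : ℂ) : ℂ :=
  1 - 504 * ∑' n : ℕ, (∑ d ∈ (n + 1).divisors, (d : ℂ) ^ 5) *
    Complex.exp (2 * Real.pi * Complex.I * ((n : ℂ) + 1) * τ)

/-- `IsWeakJacobiForm k M φ` means that `φ : ℂ → ℂ → ℂ` (viewed as a function of
`(τ, z)` on the domain `{τ : 0 < Im τ} × ℂ`) is a weak Jacobi form of weight `k`
and index `M / 2` (so `M` is twice the index, which is allowed to be half-integral):
it is holomorphic, satisfies the modular and elliptic transformation laws, and has a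
Fourier expansion `∑_{n ≥ 0} ∑_{r ∈ ℤ + M/2} c n r q^n y^r` with only
nonnegative powers of `q`. -/
def IsWeakJacobiForm (k M : ℤ) (φ : ℂ → ℂ → ℂ) : Prop :=
  DifferentiableOn ℂ (fun p : ℂ × ℂ => φ p.1 p.2) {p : ℂ × ℂ | 0 < p.1.im} ∧
  (∀ γ : Matrix.SpecialLinearGroup (Fin 2) ℤ, ∀ τ z : ℂ, 0 < τ.im →
    φ ((γ 0 0 * τ + γ 0 1) / (γ 1 0 * τ + γ 1 1)) (z / (γ 1 0 * τ + γ 1 1)) =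
      (γ 1 0 * τ + γ 1 1) ^ k *
        Complex.exp (Real.pi * Complex.I * M * (γ 1 0) * z ^ 2 / (γ 1 0 * τ + γ 1 1)) *
        φ τ z) ∧
  (∀ l μ : ℤ, ∀ τ z : ℂ, 0 < τ.im →
    φ τ (z + l * τ + μ) =
      (-1 : ℂ) ^ (M * (l + μ)) *
        Complex.exp (-(Real.pi * Complex.I * M) * ((l : ℂ) ^ 2 * τ + 2 * l * z)) * φ τ z) ∧
  (∃ c : ℕ → ℤ → ℂ, ∀ τ z : ℂ, 0 < τ.im →
    HasSum (fun p : ℕ × ℤ => c p.1 p.2 * Complex.exp (2 * Real.pi * Complex.I * (p.1 : ℂ) * τ) *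
      Complex.exp (Real.pi * Complex.I * (2 * (p.2 : ℂ) + M) * z)) (φ τ z))

/-- `IsModularForm k f` means that `f : ℂ → ℂ` (viewed as a function on the upper half
plane `{τ : 0 < Im τ}`) is a modular form of weight `k` for `SL₂(ℤ)`: it is holomorphic,
satisfies the modular transformation law, and is bounded as `Im τ → ∞`. -/
def IsModularForm (k : ℤ) (f : ℂ → ℂ) : Prop :=
  DifferentiableOn ℂ f {τ : ℂ | 0 < τ.im} ∧
  (∀ γ : Matrix.SpecialLinearGroup (Fin 2) ℤ, ∀ τ : ℂ, 0 < τ.im →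
    f ((γ 0 0 * τ + γ 0 1) / (γ 1 0 * τ + γ 1 1)) = (γ 1 0 * τ + γ 1 1) ^ k * f τ) ∧
  (∃ A C : ℝ, ∀ τ : ℂ, C ≤ τ.im → ‖f τ‖ ≤ A)

/-!
As `t → ∞`, only the terms of minimal `q`-exponent survive in each theta series; dominated
convergence applies with the series at `t = 1` as dominating function. Thus `θ₃(it, z)` and
`θ₄(it, z) = θ₃(it, z + 1/2)` tend to `1`, while `e^{πt/4} θ₂(it, z)` tends to
`y^{1/2} + y^{-1/2} = 2 cos πz`, the factor `e^{πt/4}` cancelling in `θ₂(it, z) / θ₂(it, 0)`.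
Hence `φ_{0,1}(it, z) → 4 (cos² πz + 2) = y + 10 + y⁻¹`.
-/

open Real

theorem tendsto_tsum_exp_neg_mul_smul_atTop {ι E : Type*} [NormedAddCommGroup E]
    [NormedSpace ℝ E] [CompleteSpace E] (c : ι → E) (e : ι → ℝ) (s : Finset ι)
    (hs : ∀ n ∈ s, e n = 0) (he : ∀ n ∉ s, 0 < e n)
    (hsum : Summable fun n => rexp (-e n) * ‖c n‖) :
    Tendsto (fun t : ℝ => ∑' n, rexp (-(e n * t)) • c n) atTop (𝓝 (∑ n ∈ s, c n)) := by
  classical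
  have he₀ (n : ι) : 0 ≤ e n := by
    by_cases hn : n ∈ s
    · exact (hs n hn).ge
    · exact (he n hn).le
  have hlim : Tendsto (fun t : ℝ => ∑' n, rexp (-(e n * t)) • c n) atTop
      (𝓝 (∑' n, if n ∈ s then c n else 0)) := by
    refine tendsto_tsum_of_dominated_convergence hsum (fun n => ?_) ?_
    · by_cases hn : n ∈ s
      · simp [hn, hs n hn]
      · rw [if_neg hn, ← zero_smul ℝ (c n)]
        exact (tendsto_exp_neg_atTop_nhds_zero.comp
          (tendsto_id.const_mul_atTop (he n hn))).smul_const (c n)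
    · filter_upwards [eventually_ge_atTop 1] with t ht n
      rw [norm_smul, norm_of_nonneg (exp_pos _).le]
      gcongr
      nlinarith [he₀ n]
  rwa [tsum_eq_sum (s := s) fun n hn => if_neg hn, Finset.sum_ite_of_true fun _ h => h] at hlim

theorem theta3_ofReal_mul_I (t : ℝ) (z : ℂ) :
    theta3 (t * I) z = ∑' n : ℤ, rexp (-(π * n ^ 2 * t)) • cexp (2 * π * I * n * z) := by
  refine tsum_congr fun n => ?_
  rw [real_smul, ofReal_exp]
  congr 2
  push_cast
  linear_combination (π * (n : ℂ) ^ 2 * t) * I_sq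

theorem theta4_eq_theta3_add_half (τ z : ℂ) : theta4 τ z = theta3 τ (z + 1 / 2) := by
  refine tsum_congr fun n => ?_
  have hsign : cexp (2 * π * I * n * (1 / 2)) = (-1) ^ n := by
    rw [← exp_pi_mul_I, ← exp_int_mul]
    ring_nf
  rw [mul_add, Complex.exp_add, hsign]
  ring

theorem exp_mul_theta2_ofReal_mul_I (t : ℝ) (z : ℂ) :
    rexp (π / 4 * t) • theta2 (t * I) z =
      ∑' n : ℤ, rexp (-(π * (n * (n + 1)) * t)) • cexp (2 * π * I * (n + 1 / 2) * z) := by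
  rw [theta2, ← tsum_const_smul'']
  refine tsum_congr fun n => ?_
  rw [real_smul, real_smul, ofReal_exp, ofReal_exp, ← mul_assoc, ← Complex.exp_add]
  congr 2
  push_cast
  linear_combination (π * t * ((n : ℂ) + 1 / 2) ^ 2) * I_sq

theorem summable_exp_neg_mul_sq_mul_norm_cexp (z : ℂ) :
    Summable fun n : ℤ => rexp (-(π * n ^ 2)) * ‖cexp (2 * π * I * n * z)‖ := by
  refine ((summable_jacobiTheta₂_term_iff z I).mpr (by simp)).norm.congr fun n => ?_
  rw [jacobiTheta₂_term, ← norm_exp_ofReal, ← norm_mul, ← Complex.exp_add]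
  congr 2
  push_cast
  linear_combination (π * (n : ℂ) ^ 2) * I_sq

theorem summable_exp_neg_mul_mul_succ_mul_norm_cexp (z : ℂ) :
    Summable fun n : ℤ =>
      rexp (-(π * (n * (n + 1)))) * ‖cexp (2 * π * I * (n + 1 / 2) * z)‖ := by
  refine (((summable_jacobiTheta₂_term_iff (z + I / 2) I).mpr (by simp)).norm.mul_left
    ‖cexp (π * I * z)‖).congr fun n => ?_
  rw [jacobiTheta₂_term, ← norm_exp_ofReal, ← norm_mul, ← norm_mul, ← Complex.exp_add,
    ← Complex.exp_add]
  congr 2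
  push_cast
  linear_combination (π * (n : ℂ) * (n + 1)) * I_sq

theorem tendsto_theta3_ofReal_mul_I (z : ℂ) :
    Tendsto (fun t : ℝ => theta3 (t * I) z) atTop (𝓝 1) := by
  have hpos (n : ℤ) (hn : n ∉ ({0} : Finset ℤ)) : 0 < π * (n : ℝ) ^ 2 := by
    rw [Finset.mem_singleton] at hn
    positivity
  have h := tendsto_tsum_exp_neg_mul_smul_atTop _ _ {0} (by simp) hpos
    (summable_exp_neg_mul_sq_mul_norm_cexp z)
  simp_rw [← theta3_ofReal_mul_I] at h
  simpa using h

theorem tendsto_theta4_ofReal_mul_I (z : ℂ) :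
    Tendsto (fun t : ℝ => theta4 (t * I) z) atTop (𝓝 1) := by
  simpa only [theta4_eq_theta3_add_half] using tendsto_theta3_ofReal_mul_I (z + 1 / 2)

theorem tendsto_exp_mul_theta2_ofReal_mul_I (z : ℂ) :
    Tendsto (fun t : ℝ => rexp (π / 4 * t) • theta2 (t * I) z) atTop (𝓝 (2 * cos (π * z))) := by
  have hpos (n : ℤ) (hn : n ∉ ({0, -1} : Finset ℤ)) : 0 < π * (n * (n + 1) : ℝ) := by
    simp only [Finset.mem_insert, Finset.mem_singleton, not_or] at hn
    have : (0 : ℤ) < n * (n + 1) := by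
      rcases le_or_gt 1 n with h | h
      · positivity
      · nlinarith [show n ≤ -2 by omega]
    exact mul_pos pi_pos (by exact_mod_cast this)
  have h := tendsto_tsum_exp_neg_mul_smul_atTop _ _ {0, -1} (by simp) hpos
    (summable_exp_neg_mul_mul_succ_mul_norm_cexp z)
  simp_rw [← exp_mul_theta2_ofReal_mul_I] at h
  convert h using 2
  rw [two_cos, Finset.sum_pair (by decide)]
  congr 1 <;> push_cast <;> ring_nf

theorem tendsto_theta2_div_theta2_zero_ofReal_mul_I (z : ℂ) :
    Tendsto (fun t : ℝ => theta2 (t * I) z / theta2 (t * I) 0) atTop (𝓝 (cos (π * z))) := by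
  have h := (tendsto_exp_mul_theta2_ofReal_mul_I z).div (tendsto_exp_mul_theta2_ofReal_mul_I 0)
    (by simp)
  rw [mul_zero, Complex.cos_zero, mul_one, mul_div_cancel_left₀ _ two_ne_zero] at h
  refine h.congr fun t => ?_
  simp only [real_smul]
  exact mul_div_mul_left _ _ (ofReal_ne_zero.mpr (exp_pos _).ne')

/-- The q⁰-coefficient of φ_{0,1} is y⁻¹ + 10 + y: for every z ∈ ℂ,
φ_{0,1}(it, z) → e^{-2πiz} + 10 + e^{2πiz} as t → +∞. -/
theorem phi01_q0_coefficient (z : ℂ) :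
    Filter.Tendsto (fun t : ℝ => phi01 ((t : ℂ) * Complex.I) z) Filter.atTop
      (nhds (Complex.exp (-(2 * Real.pi * Complex.I * z)) + 10 +
        Complex.exp (2 * Real.pi * Complex.I * z))) := by
  have h2 := tendsto_theta2_div_theta2_zero_ofReal_mul_I z
  have h3 := (tendsto_theta3_ofReal_mul_I z).div (tendsto_theta3_ofReal_mul_I 0) one_ne_zero
  have h4 := (tendsto_theta4_ofReal_mul_I z).div (tendsto_theta4_ofReal_mul_I 0) one_ne_zero
  convert (((h2.pow 2).add (h3.pow 2)).add (h4.pow 2)).const_mul 4 using 2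
  · rfl
  · have hcos : 2 * cos (2 * π * z) = cexp (2 * π * I * z) + cexp (-(2 * π * I * z)) := by
      rw [two_cos]
      ring_nf
    rw [Complex.cos_sq, ← mul_assoc]
    linear_combination -hcos
end

section
/- For every z ∈ ℂ, the function φ_{−2,1}(it, z) tends to e^{−2πiz} − 2 + e^{2πiz} as the real parameter t tends to +∞; that is, the q⁰-coefficient of the Fourier expansion of φ_{−2,1} is y⁻¹ − 2 + y. -/
/-! Put `q = e^{2πiτ}`, `y = e^{2πiz}`. Then `θ₁(τ, z) = -i q^{1/8} ∑ₙ (-1)ⁿ y^{n+1/2} q^{n(n+1)/2}`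
and `η(τ)⁶ = q^{1/4} ∏ₙ (1 - q^{n+1})⁶`, so the fractional powers of `q` cancel in
`φ_{-2,1} = -θ₁²/η⁶`. As `Im τ → ∞` the product tends to `1`, being continuous in `q` at `0`, and
by dominated convergence only the terms with `n(n+1) = 0`, i.e. `n = 0, -1`, survive in the
series, which leaves `(y^{1/2} - y^{-1/2})² = y⁻¹ - 2 + y`. -/

open Complex Filter Topology

open scoped Real

theorem tendsto_tsum_mul_cexp_I_mul_comap_im {ι : Type*} {c : ι → ℂ} {k : ι → ℝ}
    (hk : ∀ i, 0 ≤ k i) (hs : Summable fun i ↦ ‖c i‖ * Real.exp (-k i)) :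
    Tendsto (fun τ : ℂ ↦ ∑' i, c i * cexp (I * k i * τ)) (comap im atTop)
      (𝓝 (∑' i, if k i = 0 then c i else 0)) := by
  have norm_term (i : ι) (τ : ℂ) :
      ‖c i * cexp (I * k i * τ)‖ = ‖c i‖ * Real.exp (-(k i * τ.im)) := by
    simp [norm_exp]
  have tendsto_im : Tendsto im (comap im atTop) atTop := tendsto_comap
  refine tendsto_tsum_of_dominated_convergence hs (fun i ↦ ?_) ?_
  · split_ifs with hki
    · simpa [hki] using tendsto_const_nhds
    · rw [tendsto_zero_iff_norm_tendsto_zero]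
      simp only [norm_term]
      have hexp := Real.tendsto_exp_atBot.comp <| tendsto_neg_atTop_atBot.comp <|
        tendsto_im.const_mul_atTop ((hk i).lt_of_ne' hki)
      simpa using hexp.const_mul ‖c i‖
  · filter_upwards [tendsto_im.eventually (eventually_ge_atTop 1)] with τ hτ i
    rw [norm_term]
    gcongr
    nlinarith [hk i]

noncomputable def theta1Series (τ z : ℂ) : ℂ :=
  ∑' n : ℤ, (-1 : ℂ) ^ n * cexp (2 * π * I * (n + 1 / 2) * z) *
    cexp (I * (π * ((n : ℝ) ^ 2 + n) : ℝ) * τ)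

noncomputable def etaProduct (τ : ℂ) : ℂ :=
  ∏' n : ℕ, (1 - cexp (2 * π * I * (n + 1) * τ))

theorem theta1_eq_theta1Series (τ z : ℂ) :
    theta1 τ z = -I * cexp (π * I * τ / 4) * theta1Series τ z := by
  rw [theta1, theta1Series, mul_assoc (-I), ← tsum_mul_left (a := cexp (π * I * τ / 4))]
  congr 1
  refine tsum_congr fun n ↦ ?_
  have hsplit : cexp (π * I * (n + 1 / 2) ^ 2 * τ)
      = cexp (π * I * τ / 4) * cexp (I * (π * ((n : ℝ) ^ 2 + n) : ℝ) * τ) := by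
    rw [← Complex.exp_add]
    congr 1
    push_cast
    ring
  rw [hsplit]
  ring

theorem dedekindEta_pow_six (τ : ℂ) :
    dedekindEta τ ^ 6 = cexp (π * I * τ / 2) * etaProduct τ ^ 6 := by
  rw [dedekindEta, etaProduct, mul_pow, ← Complex.exp_nat_mul]
  congr 2
  push_cast
  ring

theorem phim21_eq_theta1Series_sq_div_etaProduct_pow (τ z : ℂ) :
    phim21 τ z = theta1Series τ z ^ 2 / etaProduct τ ^ 6 := by
  have hsq : cexp (π * I * τ / 4) ^ 2 = cexp (π * I * τ / 2) := by
    rw [← Complex.exp_nat_mul]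
    ring_nf
  rw [phim21, theta1_eq_theta1Series, dedekindEta_pow_six, mul_pow, mul_pow, hsq, neg_pow_two,
    I_sq, neg_one_mul, neg_mul, neg_neg, mul_div_mul_left _ _ (Complex.exp_ne_zero _)]

theorem tendsto_theta1Series_comap_im (z : ℂ) :
    Tendsto (fun τ ↦ theta1Series τ z) (comap im atTop)
      (𝓝 (cexp (π * I * z) - cexp (-(π * I * z)))) := by
  set c : ℤ → ℂ := fun n ↦ (-1 : ℂ) ^ n * cexp (2 * π * I * (n + 1 / 2) * z)
  have hk (n : ℤ) : 0 ≤ π * ((n : ℝ) ^ 2 + n) := by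
    have : (0 : ℤ) ≤ n ^ 2 + n := by rcases le_or_gt 0 n with h | h <;> nlinarith
    exact mul_nonneg Real.pi_pos.le (mod_cast this)
  have hk_eq_zero {n : ℤ} : π * ((n : ℝ) ^ 2 + n) = 0 ↔ n = 0 ∨ n = -1 := by
    have : (n : ℝ) ^ 2 + n = ((n * (n + 1) : ℤ) : ℝ) := by push_cast; ring
    rw [mul_eq_zero, or_iff_right Real.pi_ne_zero, this, Int.cast_eq_zero, mul_eq_zero,
      add_eq_zero_iff_eq_neg]
  -- the majorant is `e^{-π Im z}` times the terms of a Jacobi theta series at `τ = i`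
  have hs : Summable fun n : ℤ ↦ ‖c n‖ * Real.exp (-(π * ((n : ℝ) ^ 2 + n))) := by
    refine (((summable_jacobiTheta₂_term_iff (z + I / 2) I).mpr (by simp)).norm.mul_left
      (Real.exp (-(π * z.im)))).congr fun n ↦ ?_
    have hre : (2 * π * I * (n + 1 / 2) * z).re = -(2 * π * (n + 1 / 2) * z.im) := by
      simp [mul_re, mul_im]
    have him : (z + I / 2).im = z.im + 1 / 2 := by simp
    simp only [c, norm_jacobiTheta₂_term, norm_mul, norm_zpow, norm_neg, norm_one, one_zpow,
      one_mul, norm_exp, ← Real.exp_add, hre, him, I_im]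
    ring_nf
  have hlim : ∑' n : ℤ, (if π * ((n : ℝ) ^ 2 + n) = 0 then c n else 0)
      = cexp (π * I * z) - cexp (-(π * I * z)) := by
    rw [tsum_eq_sum (s := {0, -1}) fun n hn ↦ by simp_all, Finset.sum_pair (by decide)]
    norm_num [c, hk_eq_zero]
    ring_nf
  rw [← hlim]
  exact tendsto_tsum_mul_cexp_I_mul_comap_im hk hs

theorem tendsto_etaProduct_comap_im : Tendsto etaProduct (comap im atTop) (𝓝 1) := by
  have hcont : ContinuousAt (fun q : ℂ ↦ ∏' n : ℕ, (1 - q ^ (n + 1))) 0 :=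
    (ModularForm.differentiableOn_tprod_one_sub_pow.differentiableAt
      (Metric.ball_mem_nhds 0 one_pos)).continuousAt
  have hq : Tendsto (fun τ ↦ ∏' n : ℕ, (1 - Function.Periodic.qParam 1 τ ^ (n + 1)))
      (comap im atTop) (𝓝 1) := by
    simpa [Function.comp_def] using hcont.tendsto.comp
      ((Function.Periodic.qParam_tendsto one_pos).mono_right nhdsWithin_le_nhds)
  exact hq.congr fun τ ↦ by simp [etaProduct, ← ModularForm.eta_q_eq_cexp]

theorem tendsto_phim21_comap_im (z : ℂ) :
    Tendsto (fun τ ↦ phim21 τ z) (comap im atTop)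
      (𝓝 ((cexp (π * I * z) - cexp (-(π * I * z))) ^ 2)) := by
  have h := ((tendsto_theta1Series_comap_im z).pow 2).div (tendsto_etaProduct_comap_im.pow 6)
    (by simp)
  rw [one_pow, div_one] at h
  exact h.congr fun τ ↦ (phim21_eq_theta1Series_sq_div_etaProduct_pow τ z).symm

/-- The q⁰-coefficient of φ_{-2,1} is y⁻¹ - 2 + y: for every z ∈ ℂ,
φ_{-2,1}(it, z) → e^{-2πiz} - 2 + e^{2πiz} as t → +∞. -/
theorem phim21_q0_coefficient (z : ℂ) :
    Filter.Tendsto (fun t : ℝ => phim21 ((t : ℂ) * Complex.I) z) Filter.atTop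
      (nhds (Complex.exp (-(2 * Real.pi * Complex.I * z)) - 2 +
        Complex.exp (2 * Real.pi * Complex.I * z))) := by
  have hI : Tendsto (fun t : ℝ ↦ (t : ℂ) * I) atTop (comap im atTop) :=
    tendsto_comap_iff.mpr (tendsto_id.congr fun t ↦ by simp)
  have hval : (cexp (π * I * z) - cexp (-(π * I * z))) ^ 2
      = cexp (-(2 * π * I * z)) - 2 + cexp (2 * π * I * z) := by
    have hprod : cexp (π * I * z) * cexp (-(π * I * z)) = 1 := by
      rw [← Complex.exp_add]; simp
    have hsq : cexp (π * I * z) ^ 2 = cexp (2 * π * I * z) := by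
      rw [← Complex.exp_nat_mul]; ring_nf
    have hsq' : cexp (-(π * I * z)) ^ 2 = cexp (-(2 * π * I * z)) := by
      rw [← Complex.exp_nat_mul]; ring_nf
    linear_combination hsq + hsq' - 2 * hprod
  rw [← hval]
  exact (tendsto_phim21_comap_im z).comp hI
end

section
/- For every z ∈ ℂ with e^{2πiz} ≠ 1, with y = e^{2πiz}, the function e^{πiz}·E₄(it)·(θ₁(it,2z)/θ₁(it,z))·φ_{−2,1}(it,z) tends to y⁻¹ − 1 − y + y² as the real parameter t tends to +∞; that is, the q⁰-coefficient of y^{1/2} times the basis element of weak Jacobi forms of weight 2 and index 5/2 is y⁻¹ − 1 − y + y². -/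
open Complex Filter Topology

/-! At `τ = it` every factor is a series in `q = e^{-2πt} → 0`. Writing
`θ₁(τ, z) = -i q^{1/8} y^{1/2} ϑ(z + 1/2 + τ/2, τ)` with Mathlib's `jacobiTheta₂ = ϑ`, only the
terms `n = 0, -1` of `ϑ` survive, so `θ₁(τ, z) / (-i q^{1/8}) → y^{1/2} - y^{-1/2}` by dominated
convergence; likewise `η = q^{1/24} ∏ (1 - q^{n+1})` and `E₄ = 1 + 240 ∑ σ₃(n) qⁿ` have continuous
`q`-expansions with value `1` at `q = 0`. The powers of `q` cancel in `θ₁(τ, 2z) / θ₁(τ, z)` and in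
`φ_{-2,1} = -θ₁² / η⁶`, leaving `y^{1/2} (y - y⁻¹)(y^{1/2} - y^{-1/2}) = y⁻¹ - 1 - y + y²`. -/

open scoped Real

local notation "I∞" => comap Complex.im atTop

local notation "𝕢" => Function.Periodic.qParam

theorem tendsto_tsum_mul_pow_succ_nhds_zero {𝕜 : Type*} [NormedField 𝕜] [CompleteSpace 𝕜]
    {a : ℕ → 𝕜} {r : ℝ} (hr : 0 < r) (ha : Summable fun n => ‖a n‖ * r ^ (n + 1)) :
    Tendsto (fun q : 𝕜 => ∑' n, a n * q ^ (n + 1)) (𝓝 0) (𝓝 0) := by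
  have hbound : ∀ᶠ q : 𝕜 in 𝓝 0, ∀ n, ‖a n * q ^ (n + 1)‖ ≤ ‖a n‖ * r ^ (n + 1) := by
    filter_upwards [Metric.closedBall_mem_nhds (0 : 𝕜) hr] with q hq n
    rw [norm_mul, norm_pow]
    gcongr
    simpa using hq
  have hterm (n : ℕ) : Tendsto (fun q : 𝕜 => a n * q ^ (n + 1)) (𝓝 0) (𝓝 0) := by
    simpa using ((continuous_pow (n + 1)).tendsto (0 : 𝕜)).const_mul (a n)
  simpa using tendsto_tsum_of_dominated_convergence ha hterm hbound

theorem tendsto_qParam_one_nhds_zero : Tendsto (𝕢 1) I∞ (𝓝 0) :=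
  (Function.Periodic.qParam_tendsto one_pos).mono_right nhdsWithin_le_nhds

theorem E4_eq_one_add_tsum_sigma_mul_qParam_pow (τ : ℂ) :
    E4 τ = 1 + 240 * ∑' n : ℕ, (ArithmeticFunction.sigma 3 (n + 1) : ℂ) * 𝕢 1 τ ^ (n + 1) := by
  simp only [E4, ArithmeticFunction.sigma_apply, ← ModularForm.eta_q_eq_cexp]
  push_cast
  rfl

theorem tendsto_E4_atImInfty : Tendsto E4 I∞ (𝓝 1) := by
  have hsum : Summable fun n : ℕ =>
      ‖(ArithmeticFunction.sigma 3 (n + 1) : ℂ)‖ * (1 / 2 : ℝ) ^ (n + 1) := by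
    refine .of_nonneg_of_le (fun n => by positivity) (fun n => ?_)
      ((summable_nat_add_iff 1).mpr (summable_pow_mul_geometric_of_norm_lt_one 4
        (r := (1 / 2 : ℝ)) (by norm_num)))
    rw [Complex.norm_natCast]
    gcongr
    exact_mod_cast ArithmeticFunction.sigma_le_pow_succ 3 (n + 1)
  have := ((tendsto_tsum_mul_pow_succ_nhds_zero (by norm_num) hsum).comp
    tendsto_qParam_one_nhds_zero).const_mul (240 : ℂ) |>.const_add 1
  simpa [Function.comp_def, ← E4_eq_one_add_tsum_sigma_mul_qParam_pow] using this

theorem dedekindEta_eq_eta : dedekindEta = ModularForm.eta := by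
  ext τ
  simp only [dedekindEta, ModularForm.eta, ModularForm.eta_q_eq_cexp, Function.Periodic.qParam]
  congr 2
  push_cast
  ring

theorem tendsto_tprod_one_sub_eta_q_atImInfty :
    Tendsto (fun τ => ∏' n, (1 - ModularForm.eta_q n τ)) I∞ (𝓝 1) := by
  have hcont : ContinuousAt (fun q : ℂ => ∏' n : ℕ, (1 - q ^ (n + 1))) 0 :=
    (ModularForm.differentiableOn_tprod_one_sub_pow.differentiableAt
      (Metric.isOpen_ball.mem_nhds (by simp))).continuousAt
  have hvalue : ∏' n : ℕ, (1 - (0 : ℂ) ^ (n + 1)) = 1 := by simp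
  exact (hvalue ▸ hcont.tendsto).comp tendsto_qParam_one_nhds_zero

theorem theta1_eq_jacobiTheta₂ (τ z : ℂ) :
    theta1 τ z = -I * 𝕢 8 τ * (cexp (π * I * z) * jacobiTheta₂ (z + 1 / 2 + τ / 2) τ) := by
  have hterm (n : ℤ) : (-1 : ℂ) ^ n * cexp (π * I * ((n : ℂ) + 1 / 2) ^ 2 * τ) *
      cexp (2 * π * I * ((n : ℂ) + 1 / 2) * z) =
      𝕢 8 τ * (cexp (π * I * z) * jacobiTheta₂_term n (z + 1 / 2 + τ / 2) τ) := by
    rw [← Complex.exp_pi_mul_I, ← Complex.exp_int_mul, jacobiTheta₂_term,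
      Function.Periodic.qParam, ← Complex.exp_add, ← Complex.exp_add, ← Complex.exp_add,
      ← Complex.exp_add]
    congr 1
    push_cast
    ring
  rw [theta1, tsum_congr hterm, tsum_mul_left, tsum_mul_left, jacobiTheta₂]
  ring

theorem intCast_mul_add_one_nonneg (n : ℤ) : (0 : ℝ) ≤ n * (n + 1) := by
  have : 0 ≤ n * (n + 1) := by
    rcases le_or_gt 0 n with h | h
    · positivity
    · nlinarith
  exact_mod_cast this

theorem intCast_mul_add_one_pos {n : ℤ} (h0 : n ≠ 0) (h1 : n ≠ -1) : (0 : ℝ) < n * (n + 1) := by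
  have : 0 < n * (n + 1) := by
    rcases lt_or_gt_of_ne h0 with h | h
    · nlinarith [show n + 1 < 0 by omega]
    · positivity
  exact_mod_cast this

theorem norm_jacobiTheta₂_term_add_half (n : ℤ) (w τ : ℂ) :
    ‖jacobiTheta₂_term n (w + τ / 2) τ‖ = rexp (-π * (n * (n + 1)) * τ.im - 2 * π * n * w.im) := by
  rw [norm_jacobiTheta₂_term]
  congr 1
  simp
  ring

theorem tendsto_jacobiTheta₂_term_add_half_atImInfty (w : ℂ) (n : ℤ) :
    Tendsto (fun τ => jacobiTheta₂_term n (w + τ / 2) τ) I∞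
      (𝓝 (if n = 0 then 1 else if n = -1 then cexp (-(2 * π * I * w)) else 0)) := by
  by_cases h0 : n = 0
  · subst h0
    simpa [jacobiTheta₂_term] using tendsto_const_nhds
  by_cases h1 : n = -1
  · have hconst (τ : ℂ) : jacobiTheta₂_term n (w + τ / 2) τ = cexp (-(2 * π * I * w)) := by
      rw [jacobiTheta₂_term, h1]
      congr 1
      push_cast
      ring
    simp_rw [hconst]
    convert tendsto_const_nhds using 2
    simp [h1]
  simp only [h0, h1, if_false]
  rw [tendsto_zero_iff_norm_tendsto_zero]
  simp_rw [norm_jacobiTheta₂_term_add_half]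
  refine Real.tendsto_exp_atBot.comp (tendsto_atBot_add_const_right _ _ ?_)
  exact tendsto_comap.const_mul_atTop_of_neg
    (by nlinarith [Real.pi_pos, intCast_mul_add_one_pos h0 h1])

theorem tendsto_jacobiTheta₂_add_half_atImInfty (w : ℂ) :
    Tendsto (fun τ => jacobiTheta₂ (w + τ / 2) τ) I∞ (𝓝 (1 + cexp (-(2 * π * I * w)))) := by
  have hbound : ∀ᶠ τ in I∞, ∀ n : ℤ,
      ‖jacobiTheta₂_term n (w + τ / 2) τ‖ ≤ ‖jacobiTheta₂_term n (w + I / 2) I‖ := by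
    filter_upwards [tendsto_comap.eventually_ge_atTop 1] with τ hτ n
    rw [norm_jacobiTheta₂_term_add_half, norm_jacobiTheta₂_term_add_half, Real.exp_le_exp,
      I_im]
    nlinarith [mul_nonneg Real.pi_pos.le
      (mul_nonneg (sub_nonneg.mpr hτ) (intCast_mul_add_one_nonneg n))]
  have hsum : Summable fun n : ℤ => ‖jacobiTheta₂_term n (w + I / 2) I‖ :=
    summable_norm_iff.mpr ((summable_jacobiTheta₂_term_iff _ _).mpr (by simp))
  have hlimit : ∑' n : ℤ, (if n = 0 then 1 else if n = -1 then cexp (-(2 * π * I * w)) else 0) =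
      1 + cexp (-(2 * π * I * w)) := by
    rw [tsum_eq_sum (s := {0, -1}) (fun n hn => by simp_all)]
    simp
  rw [← hlimit]
  exact tendsto_tsum_of_dominated_convergence hsum
    (tendsto_jacobiTheta₂_term_add_half_atImInfty w) hbound

theorem neg_I_mul_qParam_ne_zero (h : ℝ) (τ : ℂ) : -I * 𝕢 h τ ≠ 0 :=
  mul_ne_zero (neg_ne_zero.mpr I_ne_zero) (Function.Periodic.qParam_ne_zero τ)

theorem tendsto_theta1_div_atImInfty (z : ℂ) :
    Tendsto (fun τ => theta1 τ z / (-I * 𝕢 8 τ)) I∞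
      (𝓝 (cexp (π * I * z) - cexp (-(π * I * z)))) := by
  have hlim := (tendsto_jacobiTheta₂_add_half_atImInfty (z + 1 / 2)).const_mul (cexp (π * I * z))
  have hvalue : cexp (π * I * z) * (1 + cexp (-(2 * π * I * (z + 1 / 2)))) =
      cexp (π * I * z) - cexp (-(π * I * z)) := by
    rw [mul_add, mul_one, ← Complex.exp_add,
      show π * I * z + -(2 * π * I * (z + 1 / 2)) = -(π * I * z) - π * I by ring,
      Complex.exp_sub, Complex.exp_pi_mul_I]
    ring
  rw [hvalue] at hlim
  refine hlim.congr fun τ => ?_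
  rw [theta1_eq_jacobiTheta₂, mul_div_cancel_left₀ _ (neg_I_mul_qParam_ne_zero 8 τ), add_assoc]

theorem phim21_eq (τ z : ℂ) :
    phim21 τ z = (theta1 τ z / (-I * 𝕢 8 τ)) ^ 2 / (∏' n, (1 - ModularForm.eta_q n τ)) ^ 6 := by
  have hq : 𝕢 24 τ ^ 6 = -(-I * 𝕢 8 τ) ^ 2 := by
    simp only [Function.Periodic.qParam, neg_mul, neg_sq, mul_pow, I_sq, ← Complex.exp_nat_mul]
    rw [neg_neg, one_mul]
    congr 1
    push_cast
    ring
  rw [phim21, dedekindEta_eq_eta, ModularForm.eta, mul_pow, hq, div_pow, div_div, neg_mul,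
    div_neg, neg_div, neg_neg]

theorem tendsto_ofReal_mul_I_atTop : Tendsto (fun t : ℝ => (t : ℂ) * I) atTop I∞ :=
  
  tendsto_comap_iff.mpr (tendsto_id.congr fun t => by simp)

/-- The q⁰-coefficient of y^{1/2} times the basis element of weak Jacobi forms of
weight 2 and index 5/2 is y⁻¹ - 1 - y + y²: for every z ∈ ℂ with e^{2πiz} ≠ 1,
e^{πiz}·E₄(it)·(θ₁(it,2z)/θ₁(it,z))·φ_{-2,1}(it,z) → y⁻¹ - 1 - y + y² as t → +∞. -/
theorem basis_weight2_index5half_q0_coefficient (z : ℂ)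
    (hz : Complex.exp (2 * Real.pi * Complex.I * z) ≠ 1) :
    Filter.Tendsto
      (fun t : ℝ => Complex.exp (Real.pi * Complex.I * z) * E4 ((t : ℂ) * Complex.I) *
        (theta1 ((t : ℂ) * Complex.I) (2 * z) / theta1 ((t : ℂ) * Complex.I) z) *
        phim21 ((t : ℂ) * Complex.I) z) Filter.atTop
      (nhds ((Complex.exp (2 * Real.pi * Complex.I * z))⁻¹ - 1 -
        Complex.exp (2 * Real.pi * Complex.I * z) +
        Complex.exp (2 * Real.pi * Complex.I * z) ^ 2)) := by
  set s := cexp (π * I * z)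
  have hs0 : s ≠ 0 := Complex.exp_ne_zero _
  have hy : cexp (2 * π * I * z) = s ^ 2 := by
    rw [← Complex.exp_nat_mul]; congr 1; push_cast; ring
  have hy' : cexp (π * I * (2 * z)) = s ^ 2 := by rw [← hy]; congr 1; ring
  have hden : s - s⁻¹ ≠ 0 := fun h => hz <| by
    rw [hy]; field_simp at h; linear_combination h
  have hN := Complex.exp_neg (π * I * z) ▸ tendsto_theta1_div_atImInfty z
  have hN2 := hy' ▸ Complex.exp_neg (π * I * (2 * z)) ▸ tendsto_theta1_div_atImInfty (2 * z)
  have hlim : Tendsto (fun τ => s * E4 τ * (theta1 τ (2 * z) / theta1 τ z) * phim21 τ z) I∞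
      (𝓝 (s * 1 * ((s ^ 2 - (s ^ 2)⁻¹) / (s - s⁻¹)) * ((s - s⁻¹) ^ 2 / 1 ^ 6))) :=
    ((tendsto_const_nhds.mul tendsto_E4_atImInfty).mul ((hN2.div hN hden).congr fun τ =>
      div_div_div_cancel_right₀ (neg_I_mul_qParam_ne_zero 8 τ) _ _)).mul
      (((hN.pow 2).div (tendsto_tprod_one_sub_eta_q_atImInfty.pow 6) (by simp)).congr
        fun τ => (phim21_eq τ z).symm)
  have hvalue : s * 1 * ((s ^ 2 - (s ^ 2)⁻¹) / (s - s⁻¹)) * ((s - s⁻¹) ^ 2 / 1 ^ 6) =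
      (s ^ 2)⁻¹ - 1 - s ^ 2 + (s ^ 2) ^ 2 := by
    field_simp
    ring
  rw [hy, ← hvalue]
  exact hlim.comp tendsto_ofReal_mul_I_atTop
end
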